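/- arXiv:2102.09606 — 4 statements merged into one kernel-verified Lean document; each statement's English description precedes it below -/
import Mathlib

section
/- Let ν and ν̃ be probability measures on a measurable space with ν ≪ ν̃, let W be a measurable function with Z = E_ν[e^{-W}] ∈ (0,∞), and define the optimal proposal ν* by dν*/dν = e^{-W}/Z. Then the squared relative error of the importance sampling estimator, r²(ν̃) = Var_{ν̃}( e^{-W} · (dν/dν̃) ) / Z², equals the χ² divergence χ²(ν* | ν̃) = E_{ν̃}[(dν*/dν̃)² ] − 1. -/
/-! With `f = e^{-W} · dν/dν̃`, the mean of `f` under `ν̃` is `Z` and `dν*/dν̃ = f / Z`, so both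
sides equal the second moment of `f / Z` under `ν̃` minus one. -/

open MeasureTheory ProbabilityTheory Real

namespace ProbabilityTheory

lemma variance_div_sq_eq_integral_div_sq_sub_one {Ω : Type*} [MeasurableSpace Ω]
    {μ : Measure Ω} [IsProbabilityMeasure μ] {X : Ω → ℝ} (hX : MemLp X 2 μ) {c : ℝ}
    (hmean : ∫ x, X x ∂μ = c) (hc : c ≠ 0) :
    variance X μ / c ^ 2 = ∫ x, (X x / c) ^ 2 ∂μ - 1 := by
  simp only [variance_eq_sub hX, hmean, Pi.pow_apply, div_pow, integral_div]
  field_simp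

end ProbabilityTheory

namespace MeasureTheory.Measure

lemma toReal_rnDeriv_withDensity_ofReal {α : Type*} [MeasurableSpace α] {μ ν : Measure α}
    [SigmaFinite μ] [SigmaFinite ν] (hμν : μ ≪ ν) {g : α → ℝ} (hg : AEMeasurable g ν)
    (hg_nonneg : ∀ x, 0 ≤ g x) :
    (fun x => ((μ.withDensity fun x => ENNReal.ofReal (g x)).rnDeriv ν x).toReal)
      =ᵐ[ν] fun x => g x * (μ.rnDeriv ν x).toReal := by
  filter_upwards [rnDeriv_withDensity_left_of_absolutelyContinuous hμν hg.ennreal_ofReal]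
    with x hx
  rw [hx, ENNReal.toReal_mul, ENNReal.toReal_ofReal (hg_nonneg x)]

end MeasureTheory.Measure

theorem importance_sampling_chi_sq {Ω : Type*} [MeasurableSpace Ω]
    (ν nut : Measure Ω) [IsProbabilityMeasure ν] [IsProbabilityMeasure nut]
    (hac : ν ≪ nut) (W : Ω → ℝ) (hW : Measurable W)
    (Z : ℝ) (hZ : Z = ∫ x, Real.exp (-W x) ∂ν) (hZpos : 0 < Z)
    (νstar : Measure Ω)
    (hνstar : νstar = ν.withDensity (fun x => ENNReal.ofReal (Real.exp (-W x) / Z)))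
    (hInt : Integrable (fun x => (Real.exp (-W x) * (ν.rnDeriv nut x).toReal) ^ 2) nut) :
    variance (fun x => Real.exp (-W x) * (ν.rnDeriv nut x).toReal) nut / Z ^ 2
      = (∫ x, ((νstar.rnDeriv nut x).toReal) ^ 2 ∂nut) - 1 := by
  set f : Ω → ℝ := fun x => Real.exp (-W x) * (ν.rnDeriv nut x).toReal
  have hf : Measurable f := hW.neg.exp.mul (ν.measurable_rnDeriv nut).ennreal_toReal
  have hmean : ∫ x, f x ∂nut = Z := by
    rw [hZ, ← integral_rnDeriv_smul hac]
    simp only [f, smul_eq_mul, mul_comm]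
  have hdensity : (fun x => (νstar.rnDeriv nut x).toReal) =ᵐ[nut] fun x => f x / Z := by
    rw [hνstar]
    refine (Measure.toReal_rnDeriv_withDensity_ofReal hac
      (hW.neg.exp.div_const Z).aemeasurable fun x => by positivity).trans ?_
    filter_upwards with x
    simp only [f, Pi.neg_apply]
    ring
  rw [variance_div_sq_eq_integral_div_sq_sub_one
      ((memLp_two_iff_integrable_sq hf.aestronglyMeasurable).2 hInt) hmean hZpos.ne']
  exact congrArg (· - 1) (integral_congr_ae (hdensity.fun_comp (· ^ 2))).symm
end

section
/- Let μ and λ be probability measures with μ ≪ λ. Then the χ² divergence satisfies χ²(μ | λ) ≥ e^{KL(μ | λ)} − 1, where KL(μ|λ) = ∫ log(dμ/dλ) dμ. -/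
open MeasureTheory Real

/-! Write `f = dμ/dλ`. Jensen's inequality for the convex function `exp` gives
`exp (∫ log f dμ) ≤ ∫ f dμ`, and changing the measure back to `λ` turns `∫ f dμ` into
`∫ f² dλ = χ²(μ | λ) + 1`. -/

theorem exp_integral_log_le_integral {Ω : Type*} [MeasurableSpace Ω] {μ : Measure Ω}
    [IsProbabilityMeasure μ] {g : Ω → ℝ} (hg_pos : ∀ᵐ x ∂μ, 0 < g x) (hg : Integrable g μ)
    (hlog : Integrable (fun x => log (g x)) μ) :
    exp (∫ x, log (g x) ∂μ) ≤ ∫ x, g x ∂μ := by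
  have hexp_log : (fun x => exp (log (g x))) =ᵐ[μ] g := by
    filter_upwards [hg_pos] with x hx using exp_log hx
  calc exp (∫ x, log (g x) ∂μ) ≤ ∫ x, exp (log (g x)) ∂μ :=
        convexOn_exp.map_integral_le continuous_exp.continuousOn isClosed_univ
          (.of_forall fun _ => Set.mem_univ _) hlog (hg.congr hexp_log.symm)
    _ = ∫ x, g x ∂μ := integral_congr_ae hexp_log

namespace MeasureTheory.Measure

variable {Ω : Type*} [MeasurableSpace Ω] {μ ν : Measure Ω} [HaveLebesgueDecomposition μ ν]
  [SigmaFinite μ]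

lemma toReal_rnDeriv_pos (hμν : μ ≪ ν) : ∀ᵐ x ∂μ, 0 < (μ.rnDeriv ν x).toReal := by
  filter_upwards [rnDeriv_pos hμν, hμν.ae_le (rnDeriv_lt_top μ ν)] with x hpos hlt
  exact ENNReal.toReal_pos hpos.ne' hlt.ne

lemma integrable_toReal_rnDeriv_of_integrable_sq (hμν : μ ≪ ν)
    (h : Integrable (fun x => (μ.rnDeriv ν x).toReal ^ 2) ν) :
    Integrable (fun x => (μ.rnDeriv ν x).toReal) μ := by
  refine (integrable_toReal_rnDeriv_mul_iff hμν).mp ?_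
  simpa only [sq] using h

lemma integral_toReal_rnDeriv_eq_integral_sq (hμν : μ ≪ ν) :
    ∫ x, (μ.rnDeriv ν x).toReal ∂μ = ∫ x, (μ.rnDeriv ν x).toReal ^ 2 ∂ν := by
  simp only [sq, integral_toReal_rnDeriv_mul hμν]

end MeasureTheory.Measure

theorem chi_sq_ge_exp_KL_sub_one {Ω : Type*} [MeasurableSpace Ω]
    (μ lam : Measure Ω) [IsProbabilityMeasure μ] [IsProbabilityMeasure lam]
    (hac : μ ≪ lam)
    (hInt2 : Integrable (fun x => ((μ.rnDeriv lam x).toReal) ^ 2) lam)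
    (hIntlog : Integrable (fun x => Real.log ((μ.rnDeriv lam x).toReal)) μ) :
    Real.exp (∫ x, Real.log ((μ.rnDeriv lam x).toReal) ∂μ) - 1
      ≤ (∫ x, ((μ.rnDeriv lam x).toReal) ^ 2 ∂lam) - 1 := by
  gcongr
  calc exp (∫ x, log (μ.rnDeriv lam x).toReal ∂μ) ≤ ∫ x, (μ.rnDeriv lam x).toReal ∂μ :=
        exp_integral_log_le_integral (Measure.toReal_rnDeriv_pos hac)
          (Measure.integrable_toReal_rnDeriv_of_integrable_sq hac hInt2) hIntlog
    _ = ∫ x, (μ.rnDeriv lam x).toReal ^ 2 ∂lam :=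
        Measure.integral_toReal_rnDeriv_eq_integral_sq hac
end

section
/- (Generalized Jensen inequality, lower bound) Let ν and λ be probability measures on (Ω,F), f : ℝ → ℝ convex, φ : Ω → ℝ integrable with f∘φ integrable under both measures, and m = inf_{E ∈ F, λ(E)>0} ν(E)/λ(E) with m < 1. Then for the Jensen functional J(f, μ, φ) = E_μ[f(φ)] − f(E_μ[φ]) one has m · J(f, λ, φ) ≤ J(f, ν, φ). -/
open MeasureTheory Real
open scoped ENNReal

theorem generalized_jensen_lower {Ω : Type*} [MeasurableSpace Ω]
    (ν lam : Measure Ω) [IsProbabilityMeasure ν] [IsProbabilityMeasure lam]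
    (f : ℝ → ℝ) (hf : ConvexOn ℝ Set.univ f)
    (φ : Ω → ℝ)
    (hφν : Integrable φ ν) (hphiLam : Integrable φ lam)
    (hfν : Integrable (fun x => f (φ x)) ν) (hfLam : Integrable (fun x => f (φ x)) lam)
    (m : ℝ)
    (hm : m = ⨅ E : {E : Set Ω // MeasurableSet E ∧ lam E ≠ 0},
      (ν E.1).toReal / (lam E.1).toReal)
    (hm1 : m < 1) :
    m * ((∫ x, f (φ x) ∂lam) - f (∫ x, φ x ∂lam))
      ≤ (∫ x, f (φ x) ∂ν) - f (∫ x, φ x ∂ν) := by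
  have hmnn : 0 ≤ m := by
    rw [hm]
    exact Real.iInf_nonneg fun E => by positivity
  set c : ℝ≥0∞ := ENNReal.ofReal m with hc
  -- c • lam ≤ ν
  have hcle : c • lam ≤ ν := by
    rw [Measure.le_iff]
    intro E hE
    rcases eq_or_ne (lam E) 0 with h0 | h0
    · simp [h0]
    · have hb : m ≤ (ν E).toReal / (lam E).toReal := by
        rw [hm]
        exact ciInf_le ⟨0, by rintro x ⟨i, rfl⟩; positivity⟩ (⟨E, hE, h0⟩ : {E : Set Ω // MeasurableSet E ∧ lam E ≠ 0})
      have hbpos : 0 < (lam E).toReal :=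
        ENNReal.toReal_pos h0 (measure_ne_top _ _)
      have hmb : m * (lam E).toReal ≤ (ν E).toReal := by
        rw [← le_div_iff₀ hbpos]; exact hb
      have : ENNReal.ofReal (m * (lam E).toReal) ≤ ENNReal.ofReal (ν E).toReal :=
        ENNReal.ofReal_le_ofReal hmb
      rwa [ENNReal.ofReal_mul hmnn, ENNReal.ofReal_toReal (measure_ne_top _ _),
        ENNReal.ofReal_toReal (measure_ne_top _ _)] at this
  set ρ0 : Measure Ω := ν - c • lam with hρ0
  have hfin : IsFiniteMeasure (c • lam) := by
    refine ⟨?_⟩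
    simp only [Measure.smul_apply, smul_eq_mul, measure_univ, mul_one]
    exact ENNReal.ofReal_lt_top
  have hsum : ρ0 + c • lam = ν := Measure.sub_add_cancel_of_le hcle
  set t : ℝ≥0∞ := ENNReal.ofReal (1 - m) with ht
  have htne : t ≠ 0 := by
    simp [ht, ENNReal.ofReal_eq_zero]; linarith
  have httop : t ≠ ⊤ := ENNReal.ofReal_ne_top
  have hρ0univ : ρ0 Set.univ = t := by
    have h1 : ρ0 Set.univ + (c • lam) Set.univ = ν Set.univ := by
      rw [← Measure.add_apply, hsum]
    simp only [Measure.smul_apply, smul_eq_mul, measure_univ, mul_one] at h1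
    have hc1 : c ≤ 1 := by
      rw [hc, ← ENNReal.ofReal_one]
      exact ENNReal.ofReal_le_ofReal hm1.le
    have : ρ0 Set.univ = 1 - c := by
      rw [← h1]; simp [ENNReal.add_sub_cancel_right (by simp [hc] : c ≠ ⊤)]
    rw [this, ht, hc, ← ENNReal.ofReal_one, ← ENNReal.ofReal_sub _ hmnn]
  set ρ : Measure Ω := t⁻¹ • ρ0 with hρ
  have hρprob : IsProbabilityMeasure ρ := by
    refine ⟨?_⟩
    rw [hρ, Measure.smul_apply, smul_eq_mul, hρ0univ, ENNReal.inv_mul_cancel htne httop]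
  have hρ0eq : ρ0 = t • ρ := by
    rw [hρ, smul_smul, ENNReal.mul_inv_cancel htne httop, one_smul]
  have hρ0le : ρ0 ≤ ν := Measure.sub_le
  -- integrability
  have hφρ0 : Integrable φ ρ0 := hφν.mono_measure hρ0le
  have hfρ0 : Integrable (fun x => f (φ x)) ρ0 := hfν.mono_measure hρ0le
  have hφρ : Integrable φ ρ := by
    rw [hρ]; exact hφρ0.smul_measure (ENNReal.inv_ne_top.2 htne)
  have hfρ : Integrable (fun x => f (φ x)) ρ := by
    rw [hρ]; exact hfρ0.smul_measure (ENNReal.inv_ne_top.2 htne)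
  have hφcl : Integrable φ (c • lam) := hphiLam.smul_measure (by simp [hc])
  have hfcl : Integrable (fun x => f (φ x)) (c • lam) := hfLam.smul_measure (by simp [hc])
  have hctor : c.toReal = m := ENNReal.toReal_ofReal hmnn
  have httor : t.toReal = 1 - m := ENNReal.toReal_ofReal (by linarith)
  -- integral decompositions
  have hdecomp : ∀ g : Ω → ℝ, Integrable g ν → Integrable g lam →
      ∫ x, g x ∂ν = m * (∫ x, g x ∂lam) + (1 - m) * (∫ x, g x ∂ρ) := by
    intro g hgν hglam
    have h1 : ∫ x, g x ∂ν = (∫ x, g x ∂ρ0) + ∫ x, g x ∂(c • lam) := by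
      rw [← hsum, integral_add_measure (hgν.mono_measure hρ0le)
        (hglam.smul_measure (by simp [hc]))]
    have h2 : ∫ x, g x ∂(c • lam) = m * ∫ x, g x ∂lam := by
      rw [integral_smul_measure, hctor]; rfl
    have h3 : ∫ x, g x ∂ρ0 = (1 - m) * ∫ x, g x ∂ρ := by
      rw [hρ0eq, integral_smul_measure, httor]; rfl
    rw [h1, h2, h3]; ring
  have hφeq := hdecomp φ hφν hphiLam
  have hfeq := hdecomp (fun x => f (φ x)) hfν hfLam
  -- Jensen for ρ
  have hcont : ContinuousOn f Set.univ := by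
    have := hf.continuousOn_interior
    rwa [interior_univ] at this
  have hjen : f (∫ x, φ x ∂ρ) ≤ ∫ x, f (φ x) ∂ρ :=
    hf.map_integral_le hcont isClosed_univ
      (Filter.Eventually.of_forall fun x => Set.mem_univ _) hφρ hfρ
  -- convexity of f
  have hconv : f (m * (∫ x, φ x ∂lam) + (1 - m) * (∫ x, φ x ∂ρ))
      ≤ m * f (∫ x, φ x ∂lam) + (1 - m) * f (∫ x, φ x ∂ρ) := by
    have := hf.2 (Set.mem_univ (∫ x, φ x ∂lam)) (Set.mem_univ (∫ x, φ x ∂ρ))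
      hmnn (by linarith : (0:ℝ) ≤ 1 - m) (by ring)
    simpa [smul_eq_mul] using this
  have h1m : (0:ℝ) ≤ 1 - m := by linarith
  have hjen' : (1 - m) * f (∫ x, φ x ∂ρ) ≤ (1 - m) * ∫ x, f (φ x) ∂ρ :=
    mul_le_mul_of_nonneg_left hjen h1m
  rw [hφeq, hfeq]
  linarith
end

section
/- (Relative error of exponentially tilted Gaussian with perturbed proposal) Let p = N(μ, Σ) on ℝ^d with Σ positive definite, α ∈ ℝ^d, Z = E_p[e^{−α·X}]. The optimal proposal is p* = N(μ − Σα, Σ). For the perturbed proposal p̃^ε = N(μ − Σ(α+ε), Σ) with ε ∈ ℝ^d, the squared relative error satisfies r(p̃^ε)² = Var_{p̃^ε}( e^{−α·X̃} p(X̃)/p̃^ε(X̃) ) / Z² = e^{ε·Σε} − 1. -/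
/-!
Under the proposal `q = N(m', Σ)` with `m' = μ - Σ(α + ε)` the importance weight
`e^{-α·x} p(x) / q(x)` equals `c e^{ε·x}` for a constant `c`, because the ratio of two Gaussian
densities with the same covariance is the exponential of an affine function. Importance sampling is
unbiased, so `E_q[c e^{ε·X}] = Z`, and the Gaussian moment generating function
`E e^{β·X} = e^{β·m' + β·Σβ/2}` gives `Var_q(e^{ε·X}) = (E_q e^{ε·X})² (e^{ε·Σε} - 1)`.
The moment generating function is computed by the substitution `x = m + R y` with `R Rᵀ = Σ`,
which turns it into a product of one-dimensional Gaussian integrals.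
-/

open MeasureTheory ProbabilityTheory Real Matrix

noncomputable def gaussDensity (d : ℕ) (m : Fin d → ℝ) (S : Matrix (Fin d) (Fin d) ℝ)
    (x : Fin d → ℝ) : ℝ :=
  (Real.sqrt ((2 * Real.pi) ^ d * S.det))⁻¹ *
    Real.exp (-(1 / 2) * ((x - m) ⬝ᵥ (S⁻¹ *ᵥ (x - m))))

section ChangeOfVariables
variable {ι : Type*} [Fintype ι] [DecidableEq ι] {E : Type*} [NormedAddCommGroup E]

noncomputable def Matrix.mulVecMeasurableEquiv (R : Matrix ι ι ℝ) (hR : R.det ≠ 0) :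
    (ι → ℝ) ≃ᵐ (ι → ℝ) :=
  (Matrix.toLinearEquiv' R (R.invertibleOfIsUnitDet hR.isUnit)).toContinuousLinearEquiv
    |>.toHomeomorph.toMeasurableEquiv

@[simp]
lemma Matrix.mulVecMeasurableEquiv_apply (R : Matrix ι ι ℝ) (hR : R.det ≠ 0) (y : ι → ℝ) :
    R.mulVecMeasurableEquiv hR y = R *ᵥ y :=
  rfl

lemma Matrix.map_mulVecMeasurableEquiv_volume {R : Matrix ι ι ℝ} (hR : R.det ≠ 0) :
    Measure.map (R.mulVecMeasurableEquiv hR) volume = ENNReal.ofReal |R.det|⁻¹ • volume := by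
  have := Real.map_linearMap_volume_pi_eq_smul_volume_pi (f := Matrix.toLin' R)
    (by rwa [LinearMap.det_toLin'])
  rwa [LinearMap.det_toLin', abs_inv] at this

lemma Matrix.integral_comp_mulVec [NormedSpace ℝ E] {R : Matrix ι ι ℝ} (hR : R.det ≠ 0)
    (f : (ι → ℝ) → E) :
    ∫ y, f (R *ᵥ y) = |R.det|⁻¹ • ∫ x, f x := by
  simp_rw [← mulVecMeasurableEquiv_apply R hR]
  rw [← integral_map_equiv, map_mulVecMeasurableEquiv_volume hR, integral_smul_measure,
    ENNReal.toReal_ofReal (by positivity)]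

lemma Matrix.integrable_comp_mulVec_iff {R : Matrix ι ι ℝ} (hR : R.det ≠ 0) {f : (ι → ℝ) → E} :
    Integrable f ↔ Integrable fun y => f (R *ᵥ y) := by
  rw [← integrable_smul_measure (c := ENNReal.ofReal |R.det|⁻¹) (by simpa using hR)
    ENNReal.ofReal_ne_top, ← map_mulVecMeasurableEquiv_volume hR, integrable_map_equiv]
  rfl

end ChangeOfVariables

lemma exp_mul_sub_sq_div_two (c y : ℝ) :
    exp (c * y - y ^ 2 / 2) = exp (c ^ 2 / 2) * exp (-(1 / 2) * (y - c) ^ 2) := by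
  rw [← exp_add]; ring_nf

lemma integrable_exp_mul_sub_sq_div_two (c : ℝ) :
    Integrable fun y : ℝ => exp (c * y - y ^ 2 / 2) := by
  simp_rw [exp_mul_sub_sq_div_two]
  exact ((integrable_exp_neg_mul_sq (by norm_num)).comp_sub_right c).const_mul _

lemma integral_exp_mul_sub_sq_div_two (c : ℝ) :
    ∫ y : ℝ, exp (c * y - y ^ 2 / 2) = √(2 * π) * exp (c ^ 2 / 2) := by
  simp_rw [exp_mul_sub_sq_div_two]
  rw [integral_const_mul, integral_sub_right_eq_self (fun y => exp (-(1 / 2) * y ^ 2)) c,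
    integral_gaussian, mul_comm]
  congr 2
  ring

section StandardGaussian
variable {ι : Type*} [Fintype ι]

lemma exp_dotProduct_sub_dotProduct_self_div_two_eq_prod (b y : ι → ℝ) :
    exp (b ⬝ᵥ y - y ⬝ᵥ y / 2) = ∏ i, exp (b i * y i - y i ^ 2 / 2) := by
  rw [← exp_sum, Finset.sum_sub_distrib, ← Finset.sum_div]
  simp only [dotProduct, sq]

lemma integrable_exp_dotProduct_sub_dotProduct_self_div_two (b : ι → ℝ) :
    Integrable fun y : ι → ℝ => exp (b ⬝ᵥ y - y ⬝ᵥ y / 2) := by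
  simp_rw [exp_dotProduct_sub_dotProduct_self_div_two_eq_prod]
  exact Integrable.fintype_prod fun i => integrable_exp_mul_sub_sq_div_two (b i)

lemma integral_exp_dotProduct_sub_dotProduct_self_div_two (b : ι → ℝ) :
    ∫ y : ι → ℝ, exp (b ⬝ᵥ y - y ⬝ᵥ y / 2) = √(2 * π) ^ Fintype.card ι * exp (b ⬝ᵥ b / 2) := by
  simp_rw [exp_dotProduct_sub_dotProduct_self_div_two_eq_prod]
  rw [integral_fintype_prod_volume_eq_prod (fun i t => exp (b i * t - t ^ 2 / 2))]
  simp_rw [integral_exp_mul_sub_sq_div_two]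
  rw [Finset.prod_mul_distrib, Finset.prod_const, Finset.card_univ, ← exp_sum, ← Finset.sum_div]
  simp only [dotProduct, sq]

lemma exp_dotProduct_sq (β x : ι → ℝ) : exp (β ⬝ᵥ x) ^ 2 = exp ((2 : ℝ) • β ⬝ᵥ x) := by
  rw [← exp_nat_mul, smul_dotProduct, smul_eq_mul, Nat.cast_ofNat]

end StandardGaussian

lemma Matrix.PosDef.exists_mul_transpose_eq {n : Type*} [Fintype n] [DecidableEq n]
    {S : Matrix n n ℝ} (hS : S.PosDef) : ∃ R : Matrix n n ℝ, R * Rᵀ = S ∧ R.det ≠ 0 := by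
  open scoped MatrixOrder in
  have hRR : CFC.sqrt S * CFC.sqrt S = S := CFC.sqrt_mul_sqrt_self S hS.posSemidef.nonneg
  have hRsymm : (CFC.sqrt S)ᵀ = CFC.sqrt S := by
    simpa using (CFC.sqrt_nonneg S).posSemidef.isHermitian.eq
  refine ⟨CFC.sqrt S, by rw [hRsymm, hRR], fun h => hS.det_pos.ne' ?_⟩
  rw [← hRR, det_mul, h, zero_mul]

lemma gaussDensity_nonneg {d : ℕ} (m : Fin d → ℝ) (S : Matrix (Fin d) (Fin d) ℝ)
    (x : Fin d → ℝ) : 0 ≤ gaussDensity d m S x := by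
  unfold gaussDensity; positivity

lemma continuous_gaussDensity {d : ℕ} (m : Fin d → ℝ) (S : Matrix (Fin d) (Fin d) ℝ) :
    Continuous (gaussDensity d m S) := by
  unfold gaussDensity
  fun_prop

section GaussDensity
variable {d : ℕ} {S R : Matrix (Fin d) (Fin d) ℝ}

lemma gaussDensity_pos (hS : 0 < S.det) (m x : Fin d → ℝ) : 0 < gaussDensity d m S x := by
  unfold gaussDensity; positivity

lemma gaussDensity_add_mulVec (hRS : R * Rᵀ = S) (hR : R.det ≠ 0) (m y : Fin d → ℝ) :
    gaussDensity d m S (m + R *ᵥ y) = (√(2 * π) ^ d * |R.det|)⁻¹ * exp (-(y ⬝ᵥ y / 2)) := by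
  have hRunit : IsUnit R.det := hR.isUnit
  have hquad : (R *ᵥ y) ⬝ᵥ (S⁻¹ *ᵥ (R *ᵥ y)) = y ⬝ᵥ y := by
    rw [← hRS, Matrix.mul_inv_rev, mulVec_mulVec, Matrix.mul_assoc, nonsing_inv_mul _ hRunit,
      Matrix.mul_one, dotProduct_mulVec, ← mulVec_transpose, mulVec_mulVec,
      transpose_nonsing_inv, transpose_transpose, nonsing_inv_mul _ hRunit, one_mulVec]
  have hnorm : √((2 * π) ^ d * S.det) = √(2 * π) ^ d * |R.det| := by
    rw [← hRS, det_mul, det_transpose, Real.sqrt_mul (by positivity), ← sq, Real.sqrt_sq_eq_abs,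
      ← Real.sqrt_sq (by positivity : 0 ≤ √(2 * π) ^ d), ← pow_mul, mul_comm d,
      pow_mul, Real.sq_sqrt (by positivity)]
  unfold gaussDensity
  rw [add_sub_cancel_left, hquad, hnorm]
  ring_nf

lemma exp_dotProduct_mul_gaussDensity_add_mulVec (hRS : R * Rᵀ = S) (hR : R.det ≠ 0)
    (m β y : Fin d → ℝ) :
    exp (β ⬝ᵥ (m + R *ᵥ y)) * gaussDensity d m S (m + R *ᵥ y)
      = (√(2 * π) ^ d * |R.det|)⁻¹ * exp (β ⬝ᵥ m) * exp ((β ᵥ* R) ⬝ᵥ y - y ⬝ᵥ y / 2) := by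
  rw [gaussDensity_add_mulVec hRS hR, dotProduct_add, dotProduct_mulVec, exp_add,
    sub_eq_add_neg, exp_add]
  ring

theorem integrable_exp_dotProduct_mul_gaussDensity (hS : S.PosDef) (m β : Fin d → ℝ) :
    Integrable fun x => exp (β ⬝ᵥ x) * gaussDensity d m S x := by
  obtain ⟨R, hRS, hR⟩ := hS.exists_mul_transpose_eq
  have hshift : Integrable fun x => exp (β ⬝ᵥ (m + x)) * gaussDensity d m S (m + x) := by
    rw [integrable_comp_mulVec_iff hR]
    simp_rw [exp_dotProduct_mul_gaussDensity_add_mulVec hRS hR]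
    exact (integrable_exp_dotProduct_sub_dotProduct_self_div_two _).const_mul _
  simpa using hshift.comp_add_left (-m)

theorem integral_exp_dotProduct_mul_gaussDensity (hS : S.PosDef) (m β : Fin d → ℝ) :
    ∫ x, exp (β ⬝ᵥ x) * gaussDensity d m S x = exp (β ⬝ᵥ m + β ⬝ᵥ (S *ᵥ β) / 2) := by
  obtain ⟨R, hRS, hR⟩ := hS.exists_mul_transpose_eq
  have hcov := integral_comp_mulVec hR fun x => exp (β ⬝ᵥ (m + x)) * gaussDensity d m S (m + x)
  simp_rw [exp_dotProduct_mul_gaussDensity_add_mulVec hRS hR] at hcov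
  rw [integral_add_left_eq_self (fun x => exp (β ⬝ᵥ x) * gaussDensity d m S x),
    integral_const_mul, integral_exp_dotProduct_sub_dotProduct_self_div_two,
    Fintype.card_fin] at hcov
  have hquad : (β ᵥ* R) ⬝ᵥ (β ᵥ* R) = β ⬝ᵥ (S *ᵥ β) := by
    rw [← dotProduct_mulVec, ← mulVec_transpose, mulVec_mulVec, hRS]
  rw [hquad, smul_eq_mul, eq_inv_mul_iff_mul_eq₀ (by simpa using hR)] at hcov
  rw [← hcov, exp_add]
  field_simp

end GaussDensity

lemma gaussDensity_div_gaussDensity {d : ℕ} {S : Matrix (Fin d) (Fin d) ℝ} (hS : S.IsSymm)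
    (hdet : 0 < S.det) (m m' x : Fin d → ℝ) :
    gaussDensity d m S x / gaussDensity d m' S x
      = exp ((m' ⬝ᵥ (S⁻¹ *ᵥ m') - m ⬝ᵥ (S⁻¹ *ᵥ m)) / 2) * exp ((S⁻¹ *ᵥ (m - m')) ⬝ᵥ x) := by
  have hsymm : ∀ u v, u ⬝ᵥ (S⁻¹ *ᵥ v) = (S⁻¹ *ᵥ u) ⬝ᵥ v := fun u v => by
    rw [dotProduct_mulVec, ← mulVec_transpose, hS.inv.eq]
  unfold gaussDensity
  rw [mul_div_mul_left _ _ (by positivity), ← exp_sub, ← exp_add]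
  congr 1
  simp only [mulVec_sub, dotProduct_sub, sub_dotProduct]
  rw [hsymm m x, hsymm m' x, dotProduct_comm x (S⁻¹ *ᵥ m), dotProduct_comm x (S⁻¹ *ᵥ m')]
  ring

noncomputable def gaussMeasure (d : ℕ) (m : Fin d → ℝ) (S : Matrix (Fin d) (Fin d) ℝ) :
    Measure (Fin d → ℝ) :=
  volume.withDensity fun x => ENNReal.ofReal (gaussDensity d m S x)

section GaussMeasure
variable {d : ℕ} {m : Fin d → ℝ} {S : Matrix (Fin d) (Fin d) ℝ}

lemma integral_gaussMeasure (f : (Fin d → ℝ) → ℝ) :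
    ∫ x, f x ∂gaussMeasure d m S = ∫ x, gaussDensity d m S x * f x := by
  rw [gaussMeasure, integral_withDensity_eq_integral_toReal_smul
    (continuous_gaussDensity m S).measurable.ennreal_ofReal
    (ae_of_all _ fun _ => ENNReal.ofReal_lt_top)]
  simp_rw [ENNReal.toReal_ofReal (gaussDensity_nonneg _ _ _), smul_eq_mul]

lemma integrable_gaussMeasure_iff {f : (Fin d → ℝ) → ℝ} :
    Integrable f (gaussMeasure d m S) ↔ Integrable fun x => gaussDensity d m S x * f x := by
  rw [gaussMeasure, integrable_withDensity_iff_integrable_smul'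
    (continuous_gaussDensity m S).measurable.ennreal_ofReal
    (ae_of_all _ fun _ => ENNReal.ofReal_lt_top)]
  simp_rw [ENNReal.toReal_ofReal (gaussDensity_nonneg _ _ _), smul_eq_mul]

lemma isProbabilityMeasure_gaussMeasure (hS : S.PosDef) :
    IsProbabilityMeasure (gaussMeasure d m S) := by
  constructor
  have hint := integrable_exp_dotProduct_mul_gaussDensity hS m 0
  have hone := integral_exp_dotProduct_mul_gaussDensity hS m 0
  simp only [zero_dotProduct, exp_zero, one_mul, zero_div, add_zero] at hint hone
  rw [gaussMeasure, withDensity_apply _ MeasurableSet.univ, Measure.restrict_univ,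
    ← ofReal_integral_eq_lintegral_ofReal hint (ae_of_all _ (gaussDensity_nonneg m S)), hone,
    ENNReal.ofReal_one]

lemma integral_exp_dotProduct_gaussMeasure (hS : S.PosDef) (β : Fin d → ℝ) :
    ∫ x, exp (β ⬝ᵥ x) ∂gaussMeasure d m S = exp (β ⬝ᵥ m + β ⬝ᵥ (S *ᵥ β) / 2) := by
  simp_rw [integral_gaussMeasure, mul_comm (gaussDensity d m S _)]
  exact integral_exp_dotProduct_mul_gaussDensity hS m β

lemma memLp_exp_dotProduct_gaussMeasure (hS : S.PosDef) (β : Fin d → ℝ) :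
    MemLp (fun x => exp (β ⬝ᵥ x)) 2 (gaussMeasure d m S) := by
  rw [memLp_two_iff_integrable_sq (by fun_prop), integrable_gaussMeasure_iff]
  simp_rw [exp_dotProduct_sq, mul_comm (gaussDensity d m S _)]
  exact integrable_exp_dotProduct_mul_gaussDensity hS m _

lemma variance_exp_dotProduct_gaussMeasure (hS : S.PosDef) (β : Fin d → ℝ) :
    variance (fun x => exp (β ⬝ᵥ x)) (gaussMeasure d m S)
      = (∫ x, exp (β ⬝ᵥ x) ∂gaussMeasure d m S) ^ 2 * (exp (β ⬝ᵥ (S *ᵥ β)) - 1) := by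
  have := isProbabilityMeasure_gaussMeasure (m := m) hS
  rw [variance_eq_sub (memLp_exp_dotProduct_gaussMeasure hS β)]
  simp only [Pi.pow_apply, exp_dotProduct_sq, integral_exp_dotProduct_gaussMeasure hS]
  rw [← exp_nat_mul, mul_sub, mul_one, ← exp_add]
  congr 2
  simp only [smul_dotProduct, mulVec_smul, dotProduct_smul, smul_eq_mul]
  ring

end GaussMeasure

lemma integral_mul_gaussDensity_div_gaussDensity {d : ℕ} {S : Matrix (Fin d) (Fin d) ℝ}
    (hdet : 0 < S.det) (m m' : Fin d → ℝ) (f : (Fin d → ℝ) → ℝ) :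
    ∫ x, f x * (gaussDensity d m S x / gaussDensity d m' S x) ∂gaussMeasure d m' S
      = ∫ x, f x ∂gaussMeasure d m S := by
  simp_rw [integral_gaussMeasure]
  congr 1 with x
  field_simp [(gaussDensity_pos hdet m' x).ne']

theorem gaussian_perturbed_relative_error (d : ℕ) (μ α ε : Fin d → ℝ)
    (S : Matrix (Fin d) (Fin d) ℝ) (hS : S.PosDef) (hSsymm : S.IsSymm)
    (p ptilde : Measure (Fin d → ℝ))
    (hp : p = volume.withDensity fun x => ENNReal.ofReal (gaussDensity d μ S x))
    (hpt : ptilde = volume.withDensity fun x =>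
      ENNReal.ofReal (gaussDensity d (μ - S *ᵥ (α + ε)) S x))
    (Z : ℝ) (hZ : Z = ∫ x, Real.exp (-(α ⬝ᵥ x)) ∂p) :
    variance (fun x => Real.exp (-(α ⬝ᵥ x)) *
        (gaussDensity d μ S x / gaussDensity d (μ - S *ᵥ (α + ε)) S x)) ptilde / Z ^ 2
      = Real.exp (ε ⬝ᵥ (S *ᵥ ε)) - 1 := by
  change p = gaussMeasure d μ S at hp
  change ptilde = gaussMeasure d (μ - S *ᵥ (α + ε)) S at hpt
  subst hp hpt
  set m' := μ - S *ᵥ (α + ε)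
  have hdet := hS.det_pos
  obtain ⟨c, hweight⟩ : ∃ c, (fun x => exp (-(α ⬝ᵥ x)) *
      (gaussDensity d μ S x / gaussDensity d m' S x)) = fun x => c * exp (ε ⬝ᵥ x) := by
    have hshift : S⁻¹ *ᵥ (μ - m') = α + ε := by
      rw [sub_sub_cancel, mulVec_mulVec, nonsing_inv_mul _ hdet.ne'.isUnit, one_mulVec]
    refine ⟨exp ((m' ⬝ᵥ (S⁻¹ *ᵥ m') - μ ⬝ᵥ (S⁻¹ *ᵥ μ)) / 2), funext fun x => ?_⟩
    rw [gaussDensity_div_gaussDensity hSsymm hdet, hshift, add_dotProduct, exp_add, exp_neg]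
    field_simp
  have hmean : ∫ x, c * exp (ε ⬝ᵥ x) ∂gaussMeasure d m' S = Z := by
    rw [← hweight, integral_mul_gaussDensity_div_gaussDensity hdet, hZ]
  have hZ0 : Z ≠ 0 := by
    simp_rw [hZ, ← neg_dotProduct, integral_exp_dotProduct_gaussMeasure hS]
    exact (exp_pos _).ne'
  rw [hweight, variance_const_mul, variance_exp_dotProduct_gaussMeasure hS, ← mul_assoc,
    ← mul_pow, ← integral_const_mul, hmean, mul_div_cancel_left₀ _ (pow_ne_zero 2 hZ0)]
end
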